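/- Let α ∈ (0, 1), p ∈ [1, ∞) and T > 0. Let ℓ : ℝ^d → [0, ∞) be measurable with M := ∫_{ℝ^d} (1 + |y|^p) ℓ(y) dy < ∞. There exists a constant c > 0 (depending only on d, T, α, p) such that for all 0 < s < t ≤ T: ∫_{ℝ^d} (1 + |x|^p) · |P_t ℓ(x) − P_s ℓ(x)| dx ≤ c · M · (t − s)^(α/2) · s^(−α/2). -/

import Mathlib

open Real MeasureTheory

/-- The Gaussian heat kernel `p_t(x) = (4πt)^(-d/2) exp(-|x|²/(4t))`. -/
noncomputable def heatKernel (d : ℕ) (t : ℝ) (x : EuclideanSpace ℝ (Fin d)) : ℝ :=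
  (4 * Real.pi * t) ^ (-(d : ℝ) / 2) * Real.exp (-‖x‖ ^ 2 / (4 * t))

/-- The heat semigroup `P_t f (x) = ∫ p_t(x - y) f(y) dy`. -/
noncomputable def heatSemigroup (d : ℕ) (t : ℝ) (f : EuclideanSpace ℝ (Fin d) → ℝ)
    (x : EuclideanSpace ℝ (Fin d)) : ℝ :=
  ∫ y : EuclideanSpace ℝ (Fin d), heatKernel d t (x - y) * f y

/-!
Write `P_t ℓ - P_s ℓ = (p_t - p_s) ⋆ ℓ`. The weight `1 + |x|^p` is submultiplicative, so a weighted
Young inequality bounds the left-hand side by `2^(p-1) M ∫ (1 + |x|^p) |p_t - p_s|`, and it remains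
to show that this kernel integral is `O(min 1 ((t - s)/s))`, which is at most `((t - s)/s)^(α/2)`.
Parabolic scaling `p_u(x) = u^(-d/2) p_1(x/√u)` gives the moment bound
`∫ (1 + |x|^p) p_u ≤ (1 + u^(p/2)) ∫ (1 + |x|^p) p_1`. For `t ≥ 2s` this and the triangle inequality
suffice; for `t ≤ 2s` the mean value theorem in time applies, because on `[s, 2s]` the time
derivative of the heat kernel is dominated by `2^d (d/2 + 1) p_{4s} / s`.
-/

section WeightedYoung

variable {G : Type*} [MeasurableSpace G] [AddGroup G] [MeasurableAdd₂ G] [MeasurableNeg G]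
  {μ : Measure G} [SFinite μ] [μ.IsAddRightInvariant] {w k ℓ : G → ℝ} {C : ℝ}

theorem lintegral_enorm_weight_mul_conv_le (hw0 : ∀ x, 0 ≤ w x) (hC : 0 ≤ C)
    (hw : ∀ a b, w (a + b) ≤ C * w a * w b) (hwm : Measurable w) (hk : Measurable k)
    (hℓ : Measurable ℓ) :
    ∫⁻ x, ‖w x * ∫ y, k (x - y) * ℓ y ∂μ‖ₑ ∂μ ≤
      ENNReal.ofReal C * (∫⁻ x, ‖w x * k x‖ₑ ∂μ) * ∫⁻ y, ‖w y * ℓ y‖ₑ ∂μ := by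
  have translate (y : G) : ∫⁻ x, ‖w x‖ₑ * ‖k (x - y)‖ₑ ∂μ ≤
      ENNReal.ofReal C * ‖w y‖ₑ * ∫⁻ x, ‖w x * k x‖ₑ ∂μ := by
    rw [← lintegral_add_right_eq_self _ y, ← lintegral_const_mul' _ _ (by finiteness)]
    refine lintegral_mono fun x => ?_
    have hwxy : ‖w (x + y)‖ₑ ≤ ENNReal.ofReal C * ‖w x‖ₑ * ‖w y‖ₑ := by
      simp only [Real.enorm_eq_ofReal (hw0 _), ← ENNReal.ofReal_mul hC,
        ← ENNReal.ofReal_mul (mul_nonneg hC (hw0 x))]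
      exact ENNReal.ofReal_le_ofReal (hw x y)
    calc ‖w (x + y)‖ₑ * ‖k (x + y - y)‖ₑ ≤ ENNReal.ofReal C * ‖w x‖ₑ * ‖w y‖ₑ * ‖k x‖ₑ := by
          rw [add_sub_cancel_right]; gcongr
      _ = ENNReal.ofReal C * ‖w y‖ₑ * ‖w x * k x‖ₑ := by rw [enorm_mul]; ring
  calc ∫⁻ x, ‖w x * ∫ y, k (x - y) * ℓ y ∂μ‖ₑ ∂μ
      ≤ ∫⁻ x, ∫⁻ y, ‖w x‖ₑ * ‖k (x - y)‖ₑ * ‖ℓ y‖ₑ ∂μ ∂μ := by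
        refine lintegral_mono fun x => ?_
        simp_rw [mul_assoc, lintegral_const_mul' _ _ enorm_ne_top, ← enorm_mul, enorm_mul (w x)]
        gcongr
        exact enorm_integral_le_lintegral_enorm _
    _ = ∫⁻ y, (∫⁻ x, ‖w x‖ₑ * ‖k (x - y)‖ₑ ∂μ) * ‖ℓ y‖ₑ ∂μ := by
        rw [lintegral_lintegral_swap (by fun_prop)]
        simp_rw [lintegral_mul_const' _ _ enorm_ne_top]
    _ ≤ ∫⁻ y, ENNReal.ofReal C * ‖w y‖ₑ * (∫⁻ x, ‖w x * k x‖ₑ ∂μ) * ‖ℓ y‖ₑ ∂μ := by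
        gcongr with y; exact translate y
    _ = ENNReal.ofReal C * (∫⁻ x, ‖w x * k x‖ₑ ∂μ) * ∫⁻ y, ‖w y * ℓ y‖ₑ ∂μ := by
        rw [← lintegral_const_mul _ (by fun_prop)]
        congr with y
        rw [enorm_mul]; ring

theorem integral_weight_mul_abs_conv_le (hw0 : ∀ x, 0 ≤ w x) (hC : 0 ≤ C)
    (hw : ∀ a b, w (a + b) ≤ C * w a * w b) (hwm : Measurable w) (hk : Measurable k)
    (hℓ : Measurable ℓ) (hwk : Integrable (fun x => w x * k x) μ)
    (hwℓ : Integrable (fun x => w x * ℓ x) μ) :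
    ∫ x, w x * |∫ y, k (x - y) * ℓ y ∂μ| ∂μ ≤
      C * (∫ x, w x * |k x| ∂μ) * ∫ y, w y * |ℓ y| ∂μ := by
  have habs (f : G → ℝ) : ∫ x, w x * |f x| ∂μ = ∫ x, ‖w x * f x‖ ∂μ := by
    simp_rw [norm_mul, Real.norm_of_nonneg (hw0 _), Real.norm_eq_abs]
  rw [habs, habs, habs]
  calc ∫ x, ‖w x * ∫ y, k (x - y) * ℓ y ∂μ‖ ∂μ
      ≤ (∫⁻ x, ‖w x * ∫ y, k (x - y) * ℓ y ∂μ‖ₑ ∂μ).toReal := by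
        rw [← Real.norm_of_nonneg (integral_nonneg fun _ => norm_nonneg _)]
        simpa only [norm_norm, ofReal_norm] using
          norm_integral_le_lintegral_norm (μ := μ) fun x => ‖w x * ∫ y, k (x - y) * ℓ y ∂μ‖
    _ ≤ C * (∫ x, ‖w x * k x‖ ∂μ) * ∫ y, ‖w y * ℓ y‖ ∂μ := by
        refine ENNReal.toReal_le_of_le_ofReal (by positivity) ?_
        rw [ENNReal.ofReal_mul (by positivity), ENNReal.ofReal_mul hC,
          ofReal_integral_norm_eq_lintegral_enorm hwk, ofReal_integral_norm_eq_lintegral_enorm hwℓ]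
        exact lintegral_enorm_weight_mul_conv_le hw0 hC hw hwm hk hℓ

end WeightedYoung

theorem one_add_norm_add_rpow_le {E : Type*} [SeminormedAddCommGroup E] {p : ℝ} (hp : 1 ≤ p)
    (a b : E) : 1 + ‖a + b‖ ^ p ≤ 2 ^ (p - 1) * (1 + ‖a‖ ^ p) * (1 + ‖b‖ ^ p) := by
  have hsum : ‖a + b‖ ^ p ≤ 2 ^ (p - 1) * (‖a‖ ^ p + ‖b‖ ^ p) :=
    calc ‖a + b‖ ^ p ≤ (‖a‖ + ‖b‖) ^ p :=
          rpow_le_rpow (norm_nonneg _) (norm_add_le a b) (by linarith)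
      _ ≤ 2 ^ (p - 1) * (‖a‖ ^ p + ‖b‖ ^ p) := by
          exact_mod_cast NNReal.rpow_add_le_mul_rpow_add_rpow ‖a‖₊ ‖b‖₊ hp
  have h2 : (1 : ℝ) ≤ 2 ^ (p - 1) := one_le_rpow one_le_two (by linarith)
  have ha := rpow_nonneg (norm_nonneg a) p
  have hb := rpow_nonneg (norm_nonneg b) p
  nlinarith [mul_nonneg ha hb, mul_nonneg (sub_nonneg.2 h2) (mul_nonneg ha hb)]

theorem min_one_le_rpow {r β : ℝ} (hr : 0 ≤ r) (hβ0 : 0 ≤ β) (hβ1 : β ≤ 1) : min 1 r ≤ r ^ β := by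
  rcases le_total r 1 with h | h
  · exact (min_le_right _ _).trans_eq (rpow_one r).symm |>.trans
      (rpow_le_rpow_of_exponent_ge' hr h hβ0 hβ1)
  · exact (min_le_left _ _).trans (one_le_rpow h hβ0)

theorem add_mul_exp_neg_le {a y : ℝ} (ha : 0 ≤ a) (hy : 0 ≤ y) :
    (y + a) * exp (-y) ≤ (a + 1) * exp (-y / 2) := by
  have hy_exp : y ≤ exp (y / 2) := by
    nlinarith [quadratic_le_exp_of_nonneg (by positivity : 0 ≤ y / 2)]
  have hsplit : exp (-y) = exp (-y / 2) * exp (-y / 2) := by rw [← exp_add]; ring_nf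
  have hcancel : exp (y / 2) * exp (-y / 2) = 1 := by
    rw [← exp_add, neg_div, add_neg_cancel, exp_zero]
  calc (y + a) * exp (-y) = y * exp (-y / 2) * exp (-y / 2) + a * exp (-y) := by
        rw [hsplit]; ring
    _ ≤ exp (y / 2) * exp (-y / 2) * exp (-y / 2) + a * exp (-y / 2) := by
        gcongr; linarith
    _ = (a + 1) * exp (-y / 2) := by rw [hcancel]; ring

section Gaussian

variable {V : Type*} [NormedAddCommGroup V] [InnerProductSpace ℝ V] [FiniteDimensional ℝ V]
  [MeasurableSpace V] [BorelSpace V]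

theorem integrable_exp_neg_mul_sq_norm {b : ℝ} (hb : 0 < b) :
    Integrable fun v : V => exp (-b * ‖v‖ ^ 2) := by
  refine (GaussianFourier.integrable_cexp_neg_mul_sq_norm_add (b := (b : ℂ)) (by simpa using hb)
    0 (0 : V)).norm.congr (.of_forall fun v => ?_)
  dsimp only
  rw [Complex.norm_exp]
  norm_cast
  simp

theorem rpow_mul_exp_neg_mul_sq_le {q b r : ℝ} (hq : 0 ≤ q) (hb : 0 < b) (hr : 0 ≤ r) :
    r ^ q * exp (-b * r ^ 2) ≤ exp (q ^ 2 / (2 * b)) * exp (-(b / 2) * r ^ 2) := by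
  have hrq : r ^ q ≤ exp (r * q) := by
    rw [exp_mul]
    exact rpow_le_rpow hr (by linarith [add_one_le_exp r]) hq
  have hamgm : r * q - b * r ^ 2 ≤ q ^ 2 / (2 * b) - b / 2 * r ^ 2 := by
    rw [← sub_nonneg]
    have : q ^ 2 / (2 * b) - b / 2 * r ^ 2 - (r * q - b * r ^ 2) = (q - b * r) ^ 2 / (2 * b) := by
      field_simp; ring
    rw [this]; positivity
  calc r ^ q * exp (-b * r ^ 2) ≤ exp (r * q) * exp (-b * r ^ 2) := by gcongr
    _ ≤ exp (q ^ 2 / (2 * b)) * exp (-(b / 2) * r ^ 2) := by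
        rw [← exp_add, ← exp_add]; exact exp_le_exp.2 (by linarith)

theorem integrable_norm_rpow_mul_exp_neg_mul_sq_norm {q b : ℝ} (hq : 0 ≤ q) (hb : 0 < b) :
    Integrable fun v : V => ‖v‖ ^ q * exp (-b * ‖v‖ ^ 2) := by
  refine ((integrable_exp_neg_mul_sq_norm (half_pos hb)).const_mul (exp (q ^ 2 / (2 * b)))).mono'
    (by fun_prop) (.of_forall fun v => ?_)
  rw [Real.norm_of_nonneg (by positivity)]
  exact rpow_mul_exp_neg_mul_sq_le hq hb (norm_nonneg v)

end Gaussian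

section HeatKernel

variable {d : ℕ} {p u : ℝ}

theorem heatKernel_nonneg (hu : 0 ≤ u) (x : EuclideanSpace ℝ (Fin d)) : 0 ≤ heatKernel d u x :=
  mul_nonneg (rpow_nonneg (by positivity) _) (exp_pos _).le

theorem heatKernel_le (hu : 0 ≤ u) (x : EuclideanSpace ℝ (Fin d)) :
    heatKernel d u x ≤ (4 * π * u) ^ (-(d : ℝ) / 2) := by
  refine mul_le_of_le_one_right (rpow_nonneg (by positivity) _) (exp_le_one_iff.2 ?_)
  rw [neg_div]; exact neg_nonpos.2 (by positivity)

@[fun_prop]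
theorem continuous_heatKernel (d : ℕ) (u : ℝ) : Continuous (heatKernel d u) := by
  unfold heatKernel; fun_prop

theorem sqrt_pow_mul_heatKernel_smul (hu : 0 < u) (z : EuclideanSpace ℝ (Fin d)) :
    √u ^ d * heatKernel d u (√u • z) = heatKernel d 1 z := by
  have hsqrt : √u ^ d * u ^ (-(d : ℝ) / 2) = 1 := by
    rw [sqrt_eq_rpow, ← rpow_natCast, ← rpow_mul hu.le, ← rpow_add hu]
    ring_nf; exact rpow_zero u
  have hexp : -‖√u • z‖ ^ 2 / (4 * u) = -‖z‖ ^ 2 / (4 * 1) := by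
    rw [norm_smul, mul_pow, Real.norm_of_nonneg (sqrt_nonneg u), sq_sqrt hu.le]
    field_simp
  unfold heatKernel
  simp only [hexp, mul_rpow (by positivity : (0:ℝ) ≤ 4 * π) hu.le, mul_one]
  linear_combination (4 * π) ^ (-(d : ℝ) / 2) * exp (-‖z‖ ^ 2 / 4) * hsqrt

theorem integrable_weight_mul_heatKernel (hp : 0 ≤ p) (hu : 0 < u) :
    Integrable fun x : EuclideanSpace ℝ (Fin d) => (1 + ‖x‖ ^ p) * heatKernel d u x := by
  have hb : 0 < 1 / (4 * u) := by positivity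
  have hgauss := (integrable_exp_neg_mul_sq_norm (V := EuclideanSpace ℝ (Fin d)) hb).add
    (integrable_norm_rpow_mul_exp_neg_mul_sq_norm hp hb)
  refine (hgauss.const_mul ((4 * π * u) ^ (-(d : ℝ) / 2))).congr (.of_forall fun x => ?_)
  simp only [heatKernel, Pi.add_apply]
  ring_nf

theorem integral_weight_mul_heatKernel_le {T : ℝ} (hp : 0 ≤ p) (hu : 0 < u) (huT : u ≤ T) :
    ∫ x : EuclideanSpace ℝ (Fin d), (1 + ‖x‖ ^ p) * heatKernel d u x ≤
      (1 + √T ^ p) * ∫ x : EuclideanSpace ℝ (Fin d), (1 + ‖x‖ ^ p) * heatKernel d 1 x := by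
  have hscale := Measure.integral_comp_smul (volume : Measure (EuclideanSpace ℝ (Fin d)))
    (fun x => (1 + ‖x‖ ^ p) * heatKernel d u x) √u
  rw [finrank_euclideanSpace_fin, abs_of_pos (by positivity), smul_eq_mul,
    eq_inv_mul_iff_mul_eq₀ (by positivity), ← integral_const_mul] at hscale
  rw [← hscale, ← integral_const_mul]
  refine integral_mono_of_nonneg (.of_forall fun z => ?_)
    ((integrable_weight_mul_heatKernel hp one_pos).const_mul _) (.of_forall fun z => ?_)
  · exact mul_nonneg (by positivity) (mul_nonneg (by positivity) (heatKernel_nonneg hu.le _))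
  · have hweight : 1 + ‖√u • z‖ ^ p ≤ (1 + √T ^ p) * (1 + ‖z‖ ^ p) := by
      rw [norm_smul, Real.norm_of_nonneg (sqrt_nonneg u), mul_rpow (sqrt_nonneg u) (norm_nonneg z)]
      have : √u ^ p ≤ √T ^ p := rpow_le_rpow (sqrt_nonneg u) (sqrt_le_sqrt huT) hp
      nlinarith [rpow_nonneg (norm_nonneg z) p, rpow_nonneg (sqrt_nonneg T) p]
    calc √u ^ d * ((1 + ‖√u • z‖ ^ p) * heatKernel d u (√u • z))
        = (1 + ‖√u • z‖ ^ p) * heatKernel d 1 z := by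
          rw [← sqrt_pow_mul_heatKernel_smul hu z]; ring
      _ ≤ (1 + √T ^ p) * ((1 + ‖z‖ ^ p) * heatKernel d 1 z) := by
          rw [← mul_assoc]
          exact mul_le_mul_of_nonneg_right hweight (heatKernel_nonneg zero_le_one _)

theorem hasDerivAt_heatKernel (x : EuclideanSpace ℝ (Fin d)) (hu : 0 < u) :
    HasDerivAt (fun v => heatKernel d v x)
      ((‖x‖ ^ 2 / (4 * u) - d / 2) / u * heatKernel d u x) u := by
  have hbase : HasDerivAt (fun v : ℝ => (4 * π * v) ^ (-(d : ℝ) / 2))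
      (-(d : ℝ) / 2 * (4 * π * u) ^ (-(d : ℝ) / 2 - 1) * (4 * π)) u :=
    ((hasDerivAt_id' u).const_mul (4 * π)).rpow_const (Or.inl (by positivity)) |>.congr_deriv
      (by ring)
  have hexp : HasDerivAt (fun v : ℝ => exp (-‖x‖ ^ 2 / 4 * v⁻¹))
      (exp (-‖x‖ ^ 2 / 4 * u⁻¹) * (-‖x‖ ^ 2 / 4 * -(u ^ 2)⁻¹)) u :=
    ((hasDerivAt_inv hu.ne').const_mul _).exp
  have hfun : (fun v => heatKernel d v x) =
      fun v => (4 * π * v) ^ (-(d : ℝ) / 2) * exp (-‖x‖ ^ 2 / 4 * v⁻¹) := by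
    ext v; unfold heatKernel; ring_nf
  rw [hfun]
  refine (hbase.mul hexp).congr_deriv ?_
  rw [congrFun hfun u, rpow_sub (by positivity), rpow_one]
  field_simp
  ring

theorem rpow_four_mul_pi_mul_eq_two_pow_mul {s : ℝ} (hs : 0 ≤ s) :
    (4 * π * s) ^ (-(d : ℝ) / 2) = 2 ^ d * (4 * π * (4 * s)) ^ (-(d : ℝ) / 2) := by
  have h4 : (4 : ℝ) ^ (-(d : ℝ) / 2) = (2 ^ d)⁻¹ := by
    rw [show (4 : ℝ) = 2 ^ (2 : ℝ) by norm_num, ← rpow_mul zero_le_two, ← rpow_natCast,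
      ← rpow_neg zero_le_two]
    ring_nf
  rw [show 4 * π * (4 * s) = 4 * (4 * π * s) by ring, mul_rpow zero_le_four (by positivity), h4,
    mul_inv_cancel_left₀ (by positivity)]

theorem abs_deriv_heatKernel_le {s : ℝ} (hs : 0 < s) (hsu : s ≤ u) (hus : u ≤ 2 * s)
    (x : EuclideanSpace ℝ (Fin d)) :
    |(‖x‖ ^ 2 / (4 * u) - d / 2) / u * heatKernel d u x| ≤
      2 ^ d * (d / 2 + 1) / s * heatKernel d (4 * s) x := by
  have hu : 0 < u := hs.trans_le hsu
  set y := ‖x‖ ^ 2 / (4 * u) with hy_def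
  have hy : 0 ≤ y := by positivity
  have hcoef : |(y - d / 2) / u| ≤ (y + d / 2) / s := by
    rw [abs_div, abs_of_pos hu]
    refine div_le_div₀ (by positivity) ((abs_sub _ _).trans_eq ?_) hs hsu
    rw [abs_of_nonneg hy, abs_of_nonneg (by positivity)]
  have hprofile : (y + d / 2) * exp (-y) ≤ (d / 2 + 1) * exp (-‖x‖ ^ 2 / (4 * (4 * s))) := by
    refine (add_mul_exp_neg_le (by positivity) hy).trans
      (mul_le_mul_of_nonneg_left (exp_le_exp.2 ?_) (by positivity))
    have : ‖x‖ ^ 2 / (4 * (4 * s)) ≤ y / 2 := by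
      rw [hy_def, div_div]
      exact div_le_div_of_nonneg_left (by positivity) (by positivity) (by linarith)
    rw [neg_div, neg_div]
    exact neg_le_neg this
  have hkernel : heatKernel d u x = (4 * π * u) ^ (-(d : ℝ) / 2) * exp (-y) := by
    simp only [heatKernel, hy_def, neg_div]
  have hbase : (4 * π * u) ^ (-(d : ℝ) / 2) ≤ (4 * π * s) ^ (-(d : ℝ) / 2) :=
    rpow_le_rpow_of_nonpos (by positivity) (by gcongr)
      (div_nonpos_of_nonpos_of_nonneg (neg_nonpos.2 d.cast_nonneg) zero_le_two)
  rw [abs_mul, abs_of_nonneg (heatKernel_nonneg hu.le x), hkernel]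
  calc |(y - d / 2) / u| * ((4 * π * u) ^ (-(d : ℝ) / 2) * exp (-y))
      ≤ (y + d / 2) / s * ((4 * π * s) ^ (-(d : ℝ) / 2) * exp (-y)) := by gcongr
    _ = (4 * π * s) ^ (-(d : ℝ) / 2) / s * ((y + d / 2) * exp (-y)) := by ring
    _ ≤ (4 * π * s) ^ (-(d : ℝ) / 2) / s * ((d / 2 + 1) * exp (-‖x‖ ^ 2 / (4 * (4 * s)))) := by
        gcongr
    _ = 2 ^ d * (d / 2 + 1) / s * heatKernel d (4 * s) x := by
        rw [rpow_four_mul_pi_mul_eq_two_pow_mul hs.le, heatKernel]; ring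

theorem abs_heatKernel_sub_le {s t : ℝ} (hs : 0 < s) (hst : s ≤ t) (ht : t ≤ 2 * s)
    (x : EuclideanSpace ℝ (Fin d)) :
    |heatKernel d t x - heatKernel d s x| ≤
      2 ^ d * (d / 2 + 1) * ((t - s) / s) * heatKernel d (4 * s) x := by
  have hmvt := norm_image_sub_le_of_norm_deriv_le_segment'
    (f := fun v => heatKernel d v x) (C := 2 ^ d * (d / 2 + 1) / s * heatKernel d (4 * s) x)
    (fun v hv => (hasDerivAt_heatKernel x (hs.trans_le hv.1)).hasDerivWithinAt)
    (fun v hv => abs_deriv_heatKernel_le hs hv.1 (by linarith [hv.2]) x) t ⟨hst, le_rfl⟩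
  rw [Real.norm_eq_abs] at hmvt
  calc _ ≤ _ := hmvt
    _ = _ := by ring

theorem integral_weight_mul_abs_heatKernel_sub_le_of_le_two_mul {s t : ℝ} (hp : 0 ≤ p)
    (hs : 0 < s) (hst : s ≤ t) (ht : t ≤ 2 * s) :
    ∫ x : EuclideanSpace ℝ (Fin d), (1 + ‖x‖ ^ p) * |heatKernel d t x - heatKernel d s x| ≤
      2 ^ d * (d / 2 + 1) * ((t - s) / s) *
        ∫ x : EuclideanSpace ℝ (Fin d), (1 + ‖x‖ ^ p) * heatKernel d (4 * s) x := by
  rw [← integral_const_mul]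
  refine integral_mono_of_nonneg (.of_forall fun x => by positivity)
    ((integrable_weight_mul_heatKernel hp (by positivity)).const_mul _) (.of_forall fun x => ?_)
  dsimp only
  rw [mul_left_comm]
  exact mul_le_mul_of_nonneg_left (abs_heatKernel_sub_le hs hst ht x) (by positivity)

theorem integral_weight_mul_abs_heatKernel_sub_le_add {s t : ℝ} (hp : 0 ≤ p) (hs : 0 < s)
    (ht : 0 < t) :
    ∫ x : EuclideanSpace ℝ (Fin d), (1 + ‖x‖ ^ p) * |heatKernel d t x - heatKernel d s x| ≤
      (∫ x : EuclideanSpace ℝ (Fin d), (1 + ‖x‖ ^ p) * heatKernel d t x) +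
        ∫ x : EuclideanSpace ℝ (Fin d), (1 + ‖x‖ ^ p) * heatKernel d s x := by
  rw [← integral_add (integrable_weight_mul_heatKernel hp ht)
    (integrable_weight_mul_heatKernel hp hs)]
  refine integral_mono_of_nonneg (.of_forall fun x => by positivity)
    ((integrable_weight_mul_heatKernel hp ht).add (integrable_weight_mul_heatKernel hp hs))
    (.of_forall fun x => ?_)
  dsimp only
  rw [← mul_add]
  refine mul_le_mul_of_nonneg_left ((abs_sub _ _).trans_eq ?_) (by positivity)
  rw [abs_of_nonneg (heatKernel_nonneg ht.le x), abs_of_nonneg (heatKernel_nonneg hs.le x)]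

theorem integral_weight_mul_abs_heatKernel_sub_le {s t T : ℝ} (hp : 0 ≤ p) (hs : 0 < s)
    (hst : s < t) (htT : t ≤ T) :
    ∫ x : EuclideanSpace ℝ (Fin d), (1 + ‖x‖ ^ p) * |heatKernel d t x - heatKernel d s x| ≤
      (d + 2) * 2 ^ d * ((1 + √(4 * T) ^ p) *
        ∫ x : EuclideanSpace ℝ (Fin d), (1 + ‖x‖ ^ p) * heatKernel d 1 x) *
          min 1 ((t - s) / s) := by
  set B := (1 + √(4 * T) ^ p) * ∫ x : EuclideanSpace ℝ (Fin d), (1 + ‖x‖ ^ p) * heatKernel d 1 x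
  have hmoment {u : ℝ} (hu : 0 < u) (huT : u ≤ 4 * T) :
      ∫ x : EuclideanSpace ℝ (Fin d), (1 + ‖x‖ ^ p) * heatKernel d u x ≤ B :=
    integral_weight_mul_heatKernel_le hp hu huT
  have hB : 0 ≤ B :=
    (integral_nonneg fun x => by positivity [heatKernel_nonneg hs.le x]).trans
      (hmoment hs (by linarith))
  have h2d : (1 : ℝ) ≤ 2 ^ d := one_le_pow₀ one_le_two
  have hd : (0 : ℝ) ≤ d := d.cast_nonneg
  rcases le_or_gt t (2 * s) with hclose | hfar
  · have hρ0 : 0 ≤ (t - s) / s := div_nonneg (by linarith) hs.le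
    rw [min_eq_right (by rw [div_le_one hs]; linarith)]
    calc _ ≤ 2 ^ d * (d / 2 + 1) * ((t - s) / s) *
            ∫ x : EuclideanSpace ℝ (Fin d), (1 + ‖x‖ ^ p) * heatKernel d (4 * s) x :=
          integral_weight_mul_abs_heatKernel_sub_le_of_le_two_mul hp hs hst.le hclose
      _ ≤ 2 ^ d * (d / 2 + 1) * ((t - s) / s) * B := by
          gcongr; exact hmoment (by positivity) (by linarith)
      _ ≤ (d + 2) * 2 ^ d * B * ((t - s) / s) := by
          nlinarith [mul_nonneg (mul_nonneg (by positivity : (0 : ℝ) ≤ 2 ^ d) hB) hρ0]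
  · rw [min_eq_left (by rw [one_le_div hs]; linarith)]
    calc _ ≤ _ := integral_weight_mul_abs_heatKernel_sub_le_add hp hs (hs.trans hst)
      _ ≤ B + B := add_le_add (hmoment (hs.trans hst) (by linarith)) (hmoment hs (by linarith))
      _ ≤ (d + 2) * 2 ^ d * B * 1 := by
          nlinarith [mul_nonneg (mul_nonneg hd hB) (by positivity : (0 : ℝ) ≤ 2 ^ d),
            mul_nonneg (sub_nonneg.2 h2d) hB]

theorem integrable_heatKernel_sub_mul {ℓ : EuclideanSpace ℝ (Fin d) → ℝ} (hℓ : Integrable ℓ)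
    (hu : 0 ≤ u) (x : EuclideanSpace ℝ (Fin d)) :
    Integrable fun y => heatKernel d u (x - y) * ℓ y :=
  hℓ.bdd_mul (c := (4 * π * u) ^ (-(d : ℝ) / 2)) (by fun_prop)
    (.of_forall fun y => by
      rw [Real.norm_of_nonneg (heatKernel_nonneg hu _)]; exact heatKernel_le hu _)

theorem heatSemigroup_sub_heatSemigroup {s t : ℝ} {ℓ : EuclideanSpace ℝ (Fin d) → ℝ}
    (hℓ : Integrable ℓ) (hs : 0 ≤ s) (ht : 0 ≤ t) (x : EuclideanSpace ℝ (Fin d)) :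
    heatSemigroup d t ℓ x - heatSemigroup d s ℓ x =
      ∫ y, (heatKernel d t (x - y) - heatKernel d s (x - y)) * ℓ y := by
  simp_rw [heatSemigroup, sub_mul]
  exact (integral_sub (integrable_heatKernel_sub_mul hℓ ht x)
    (integrable_heatKernel_sub_mul hℓ hs x)).symm

theorem integral_weight_mul_abs_heatSemigroup_sub_le {s t : ℝ}
    {ℓ : EuclideanSpace ℝ (Fin d) → ℝ} (hp : 1 ≤ p) (hs : 0 < s) (ht : 0 < t) (hℓ : Measurable ℓ)
    (hwℓ : Integrable fun y : EuclideanSpace ℝ (Fin d) => (1 + ‖y‖ ^ p) * ℓ y) :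
    ∫ x, (1 + ‖x‖ ^ p) * |heatSemigroup d t ℓ x - heatSemigroup d s ℓ x| ≤
      2 ^ (p - 1) * (∫ x, (1 + ‖x‖ ^ p) * |heatKernel d t x - heatKernel d s x|) *
        ∫ y, (1 + ‖y‖ ^ p) * |ℓ y| := by
  have hp0 : 0 ≤ p := by linarith
  have hℓi : Integrable ℓ := hwℓ.mono hℓ.aestronglyMeasurable (.of_forall fun y => by
    rw [norm_mul, Real.norm_of_nonneg (by positivity : (0 : ℝ) ≤ 1 + ‖y‖ ^ p)]
    exact le_mul_of_one_le_left (norm_nonneg _) (le_add_of_nonneg_right (by positivity)))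
  have hwk : Integrable fun x : EuclideanSpace ℝ (Fin d) =>
      (1 + ‖x‖ ^ p) * (heatKernel d t x - heatKernel d s x) := by
    refine ((integrable_weight_mul_heatKernel hp0 ht).sub
      (integrable_weight_mul_heatKernel hp0 hs)).congr (.of_forall fun x => ?_)
    simp only [Pi.sub_apply, mul_sub]
  simp_rw [heatSemigroup_sub_heatSemigroup hℓi hs.le ht.le]
  exact integral_weight_mul_abs_conv_le (w := fun x => 1 + ‖x‖ ^ p)
    (k := fun z => heatKernel d t z - heatKernel d s z) (fun x => by positivity) (by positivity)
    (one_add_norm_add_rpow_le hp) (by fun_prop) (by fun_prop) hℓ hwk hwℓ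

end HeatKernel

theorem stmt_15_general (d : ℕ) (α p T : ℝ) (hα0 : 0 < α) (hα1 : α < 1) (hp : 1 ≤ p) :
    ∃ c : ℝ, 0 < c ∧ ∀ ℓ : EuclideanSpace ℝ (Fin d) → ℝ,
      Measurable ℓ → (∀ y, 0 ≤ ℓ y) →
      Integrable (fun y : EuclideanSpace ℝ (Fin d) => (1 + ‖y‖ ^ p) * ℓ y) →
      ∀ s t : ℝ, 0 < s → s < t → t ≤ T →
        ∫ x : EuclideanSpace ℝ (Fin d),
            (1 + ‖x‖ ^ p) * |heatSemigroup d t ℓ x - heatSemigroup d s ℓ x| ≤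
          c * (∫ y : EuclideanSpace ℝ (Fin d), (1 + ‖y‖ ^ p) * ℓ y) *
            (t - s) ^ (α / 2) * s ^ (-α / 2) := by
  set K := (d + 2) * 2 ^ d * ((1 + √(4 * T) ^ p) *
    ∫ x : EuclideanSpace ℝ (Fin d), (1 + ‖x‖ ^ p) * heatKernel d 1 x)
  have hK : 0 ≤ K := by
    have : 0 ≤ ∫ x : EuclideanSpace ℝ (Fin d), (1 + ‖x‖ ^ p) * heatKernel d 1 x :=
      integral_nonneg fun x => by positivity [heatKernel_nonneg zero_le_one x]
    positivity
  refine ⟨2 ^ (p - 1) * K + 1, by positivity, fun ℓ hℓ hℓ0 hwℓ s t hs hst htT => ?_⟩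
  have hρ0 : 0 ≤ (t - s) / s := div_nonneg (by linarith) hs.le
  have hρ : ((t - s) / s) ^ (α / 2) = (t - s) ^ (α / 2) * s ^ (-α / 2) := by
    rw [div_rpow (by linarith) hs.le, neg_div, rpow_neg hs.le, div_eq_mul_inv]
  have hM : ∫ y, (1 + ‖y‖ ^ p) * |ℓ y| = ∫ y, (1 + ‖y‖ ^ p) * ℓ y := by
    simp_rw [abs_of_nonneg (hℓ0 _)]
  have hM0 : 0 ≤ ∫ y, (1 + ‖y‖ ^ p) * ℓ y := integral_nonneg fun y => by positivity [hℓ0 y]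
  have hkernel := (integral_weight_mul_abs_heatKernel_sub_le (by linarith) hs hst htT).trans
    (mul_le_mul_of_nonneg_left (min_one_le_rpow (β := α / 2) hρ0 (by positivity) (by linarith)) hK)
  calc _ ≤ _ := integral_weight_mul_abs_heatSemigroup_sub_le hp hs (hs.trans hst) hℓ hwℓ
    _ ≤ 2 ^ (p - 1) * (K * ((t - s) / s) ^ (α / 2)) * ∫ y, (1 + ‖y‖ ^ p) * ℓ y := by
        rw [hM]; gcongr
    _ ≤ _ := by
        rw [mul_assoc _ ((t - s) ^ (α / 2)), ← hρ]
        nlinarith [mul_nonneg hM0 (rpow_nonneg hρ0 (α / 2))]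

theorem stmt_15 (d : ℕ) (α p T : ℝ) (hα0 : 0 < α) (hα1 : α < 1) (hp : 1 ≤ p) (hT : 0 < T) :
    ∃ c : ℝ, 0 < c ∧ ∀ ℓ : EuclideanSpace ℝ (Fin d) → ℝ,
      Measurable ℓ → (∀ y, 0 ≤ ℓ y) →
      Integrable (fun y : EuclideanSpace ℝ (Fin d) => (1 + ‖y‖ ^ p) * ℓ y) →
      ∀ s t : ℝ, 0 < s → s < t → t ≤ T →
        ∫ x : EuclideanSpace ℝ (Fin d),
            (1 + ‖x‖ ^ p) * |heatSemigroup d t ℓ x - heatSemigroup d s ℓ x| ≤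
          c * (∫ y : EuclideanSpace ℝ (Fin d), (1 + ‖y‖ ^ p) * ℓ y) *
            (t - s) ^ (α / 2) * s ^ (-α / 2) :=
  stmt_15_general d α p T hα0 hα1 hp
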